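/- Let S be a ℂ-submodule of (m × n → ℂ) and suppose there exists a nonzero Hermitian matrix T supported on S with trB T = 0. Let ρ be a density matrix supported on S whose rank equals the dimension of S (i.e., ρ has full rank on S). Then there exist two distinct density matrices ρ1 ≠ ρ2, both supported on S, both of rank strictly less than dim S, such that trB ρ1 = trB ρ2 = trB ρ. -/

import Mathlib

open scoped ComplexOrder

noncomputable section

/-- Partial trace over the second factor. -/
def trB {m n : Type*} [Fintype n] (ρ : Matrix (m × n) (m × n) ℂ) : Matrix m m ℂ :=
  Matrix.of fun i i' => ∑ j, ρ (i, j) (i', j)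

/-- Partial trace over the first factor. -/
def trA {m n : Type*} [Fintype m] (ρ : Matrix (m × n) (m × n) ℂ) : Matrix n n ℂ :=
  Matrix.of fun j j' => ∑ i, ρ (i, j) (i, j')

/-- The outer product `|ψ⟩⟨φ|`. -/
def outer {k : Type*} (ψ φ : k → ℂ) : Matrix k k ℂ :=
  Matrix.of fun x y => ψ x * (starRingEnd ℂ) (φ y)

/-- A density matrix: positive semidefinite with trace one. -/
def IsDensity {k : Type*} [Fintype k] (ρ : Matrix k k ℂ) : Prop :=
  ρ.PosSemidef ∧ ρ.trace = 1

/-- `P` is the matrix of the orthogonal projection onto the submodule `S`. -/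
def IsOrthProjOnto {k : Type*} [Fintype k] (S : Submodule ℂ (k → ℂ)) (P : Matrix k k ℂ) : Prop :=
  P.IsHermitian ∧ P * P = P ∧ (∀ x, P.mulVec x ∈ S) ∧ ∀ y ∈ S, P.mulVec y = y

/-- `T` is supported on `S`: `P * T * P = T` for the orthogonal projection `P` onto `S`. -/
def SupportedOn {k : Type*} [Fintype k] (S : Submodule ℂ (k → ℂ)) (T : Matrix k k ℂ) : Prop :=
  ∃ P, IsOrthProjOnto S P ∧ P * T * P = T

/-- The set of reduced density matrices on the first factor. -/
def DB {m n : Type*} [Fintype m] [Fintype n] (S : Submodule ℂ (m × n → ℂ)) :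
    Set (Matrix m m ℂ) :=
  {σ | ∃ ρ, IsDensity ρ ∧ SupportedOn S ρ ∧ trB ρ = σ}

/-! Since `trB T = 0`, the nonzero Hermitian matrix `T` is traceless, so neither `T` nor `-T`
is positive semidefinite. Let `P` be the projection onto `S`. Because `ρ` has full rank on `S`,
`ρ + (1 - P)` is positive definite, say `R⋆ R`, and `ρ + (1 - P) + tT = R⋆ (1 + tA) R` with
`A = R⋆⁻¹ T R⁻¹`. Taking `t = -1/λ` for the least eigenvalue `λ < 0` of `A` makes this matrix
positive semidefinite and singular. Compressing by `P` shows that `ρ + tT` is then a density matrix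
on `S` with a kernel vector in `S`, hence of rank below `dim S`; it has the partial trace of `ρ`.
Doing the same with `-T` gives the second matrix `ρ - sT`. -/

open Matrix

namespace Matrix

variable {k 𝕜 : Type*} [Fintype k] [RCLike 𝕜]

theorem PosSemidef.mulVec_eq_zero_of_add {A B : Matrix k k 𝕜} (hA : A.PosSemidef)
    (hB : B.PosSemidef) {x : k → 𝕜} (h : (A + B) *ᵥ x = 0) : A *ᵥ x = 0 ∧ B *ᵥ x = 0 := by
  have hsum : star x ⬝ᵥ A *ᵥ x + star x ⬝ᵥ B *ᵥ x = 0 := by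
    rw [← dotProduct_add, ← add_mulVec, h, dotProduct_zero]
  obtain ⟨hAx, hBx⟩ := (add_eq_zero_iff_of_nonneg (hA.dotProduct_mulVec_nonneg x)
    (hB.dotProduct_mulVec_nonneg x)).1 hsum
  exact ⟨(hA.dotProduct_mulVec_zero_iff x).1 hAx, (hB.dotProduct_mulVec_zero_iff x).1 hBx⟩

variable [DecidableEq k]

theorem IsHermitian.posSemidef_sub_smul_one {A : Matrix k k 𝕜} (hA : A.IsHermitian) {c : ℝ}
    (hc : ∀ i, c ≤ hA.eigenvalues i) : (A - (c : 𝕜) • 1).PosSemidef := by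
  refine posSemidef_iff_isHermitian_and_spectrum_nonneg.2 ⟨hA.sub (by simp [IsHermitian]), ?_⟩
  rw [← Algebra.algebraMap_eq_smul_one, ← spectrum.sub_singleton_eq, hA.spectrum_eq_image_range]
  rintro _ ⟨_, ⟨_, ⟨i, rfl⟩, rfl⟩, _, rfl, rfl⟩
  show (0 : 𝕜) ≤ _ - _
  rw [← RCLike.ofReal_sub]
  exact RCLike.ofReal_nonneg.2 (sub_nonneg.2 (hc i))

theorem IsHermitian.exists_posSemidef_one_add_smul_of_not_posSemidef {A : Matrix k k 𝕜}
    (hA : A.IsHermitian) (hA' : ¬A.PosSemidef) :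
    ∃ t : ℝ, 0 < t ∧ (1 + (t : 𝕜) • A).PosSemidef ∧ ∃ w ≠ 0, (1 + (t : 𝕜) • A) *ᵥ w = 0 := by
  obtain ⟨j, hj⟩ : ∃ j, hA.eigenvalues j < 0 := by
    simpa [hA.posSemidef_iff_eigenvalues_nonneg, Pi.le_def] using hA'
  have : Nonempty k := ⟨j⟩
  obtain ⟨i, hi⟩ := Finite.exists_min hA.eigenvalues
  set μ := hA.eigenvalues i
  have hμ : μ < 0 := (hi j).trans_lt hj
  have hsmul : 1 + ((-μ⁻¹ : ℝ) : 𝕜) • A = ((-μ⁻¹ : ℝ) : 𝕜) • (A - (μ : 𝕜) • 1) := by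
    rw [smul_sub, smul_smul, ← RCLike.ofReal_mul, neg_mul, inv_mul_cancel₀ hμ.ne]
    simp only [RCLike.ofReal_neg, RCLike.ofReal_one, neg_smul, one_smul, sub_neg_eq_add]
    abel
  refine ⟨-μ⁻¹, by simpa using hμ, ?_, hA.eigenvectorBasis i, ?_, ?_⟩
  · rw [hsmul]
    exact (hA.posSemidef_sub_smul_one hi).smul (RCLike.ofReal_nonneg.2 (by simpa using hμ.le))
  · exact (WithLp.ofLp_eq_zero 2).ne.2 (hA.eigenvectorBasis.orthonormal.ne_zero i)
  · rw [hsmul, smul_mulVec, sub_mulVec, hA.mulVec_eigenvectorBasis, smul_mulVec, one_mulVec,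
      RCLike.real_smul_eq_coe_smul (K := 𝕜), sub_self, smul_zero]

open scoped MatrixOrder in
theorem PosDef.exists_posSemidef_add_smul_of_not_posSemidef {B T : Matrix k k 𝕜}
    (hB : B.PosDef) (hT : T.IsHermitian) (hT' : ¬T.PosSemidef) :
    ∃ t : ℝ, 0 < t ∧ (B + (t : 𝕜) • T).PosSemidef ∧ ∃ u ≠ 0, (B + (t : 𝕜) • T) *ᵥ u = 0 := by
  obtain ⟨R, hR, rfl⟩ :=
    CStarAlgebra.isStrictlyPositive_iff_eq_star_mul_self.1 hB.isStrictlyPositive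
  set V : Matrix k k 𝕜 := ↑hR.unit⁻¹
  have hVR : V * R = 1 := hR.unit.inv_mul
  have hRV : R * V = 1 := hR.unit.mul_inv
  set A := star V * T * V
  have hTA : T = star R * A * R := by
    simp only [A, ← mul_assoc]
    rw [← star_mul, hVR, star_one, one_mul, mul_assoc, hVR, mul_one]
  have hconj (t : ℝ) : star R * R + (t : 𝕜) • T = star R * (1 + (t : 𝕜) • A) * R := by
    rw [hTA, mul_add, add_mul, mul_one, mul_smul_comm, smul_mul_assoc]
  have hA : A.IsHermitian := isHermitian_conjTranspose_mul_mul V hT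
  have hA' : ¬A.PosSemidef := by
    rwa [hTA, Matrix.IsUnit.posSemidef_star_left_conjugate_iff hR] at hT'
  obtain ⟨t, ht, hpsd, w, hw, hker⟩ := hA.exists_posSemidef_one_add_smul_of_not_posSemidef hA'
  refine ⟨t, ht, ?_, V *ᵥ w, fun h => hw ?_, ?_⟩
  · rwa [hconj, Matrix.IsUnit.posSemidef_star_left_conjugate_iff hR]
  · rw [← one_mulVec w, ← hRV, ← mulVec_mulVec, h, mulVec_zero]
  · rw [hconj, mulVec_mulVec, Matrix.mul_assoc _ R V, hRV, mul_one, ← mulVec_mulVec, hker,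
      mulVec_zero]

end Matrix

namespace IsOrthProjOnto

variable {k : Type*} [Fintype k] {S : Submodule ℂ (k → ℂ)} {P M : Matrix k k ℂ}

theorem unique {Q : Matrix k k ℂ} (hP : IsOrthProjOnto S P) (hQ : IsOrthProjOnto S Q) : P = Q := by
  have hQP : Q * P = P := ext_iff_mulVec.2 fun x => by
    rw [← mulVec_mulVec, hQ.2.2.2 _ (hP.2.2.1 x)]
  have hPQ : P * Q = Q := ext_iff_mulVec.2 fun x => by
    rw [← mulVec_mulVec, hP.2.2.2 _ (hQ.2.2.1 x)]
  calc P = (Q * P)ᴴ := by rw [hQP, hP.1.eq]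
    _ = P * Q := by rw [conjTranspose_mul, hP.1.eq, hQ.1.eq]
    _ = Q := hPQ

theorem mul_eq_of_mul_mul_eq (hP : IsOrthProjOnto S P) (hPM : P * M * P = M) : M * P = M := by
  rw [← hPM, Matrix.mul_assoc, hP.2.1]

theorem rank_lt_finrank (hP : IsOrthProjOnto S P) (hMP : M * P = M) {v : k → ℂ} (hv : v ∈ S)
    (hv0 : v ≠ 0) (hMv : M *ᵥ v = 0) : M.rank < Module.finrank ℂ S := by
  set f := M.mulVecLin.domRestrict S
  have hrange : LinearMap.range M.mulVecLin ≤ LinearMap.range f := by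
    rintro _ ⟨x, rfl⟩
    exact ⟨⟨P *ᵥ x, hP.2.2.1 x⟩, by
      change M *ᵥ (P *ᵥ x) = M *ᵥ x
      rw [mulVec_mulVec, hMP]⟩
  have hker : 0 < Module.finrank ℂ (LinearMap.ker f) :=
    Module.finrank_pos_iff_exists_ne_zero.2
      ⟨(⟨⟨v, hv⟩, hMv⟩ : LinearMap.ker f), fun h => hv0 <| by
        simpa using congrArg (fun x : LinearMap.ker f => ((x : S) : k → ℂ)) h⟩
  have := f.finrank_range_add_finrank_ker
  have := Submodule.finrank_mono hrange
  unfold Matrix.rank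
  omega

variable [DecidableEq k]

theorem mem_of_one_sub_mulVec_eq_zero (hP : IsOrthProjOnto S P) {u : k → ℂ}
    (hu : (1 - P) *ᵥ u = 0) : u ∈ S := by
  rw [sub_mulVec, one_mulVec, sub_eq_zero] at hu
  exact hu ▸ hP.2.2.1 u

theorem posSemidef_one_sub (hP : IsOrthProjOnto S P) : (1 - P).PosSemidef := by
  have h : (1 - P)ᴴ * (1 - P) = 1 - P := by
    rw [conjTranspose_sub, conjTranspose_one, hP.1.eq, sub_mul, mul_sub, mul_sub, hP.2.1]
    simp
  exact h ▸ posSemidef_conjTranspose_mul_self (1 - P)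

theorem posSemidef_of_posSemidef_add_one_sub (hP : IsOrthProjOnto S P) (hPM : P * M * P = M)
    (h : (M + (1 - P)).PosSemidef) : M.PosSemidef := by
  have hcompress : Pᴴ * (M + (1 - P)) * P = M := by
    rw [hP.1.eq, mul_add, add_mul, hPM, mul_sub, sub_mul, mul_one, hP.2.1, hP.2.1, sub_self,
      add_zero]
  exact hcompress ▸ h.conjTranspose_mul_mul_same P

theorem mulVec_eq_zero_and_mem_of_add_one_sub (hP : IsOrthProjOnto S P) (hM : M.PosSemidef)
    {u : k → ℂ} (hu : (M + (1 - P)) *ᵥ u = 0) : M *ᵥ u = 0 ∧ u ∈ S :=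
  have h := hM.mulVec_eq_zero_of_add hP.posSemidef_one_sub hu
  ⟨h.1, hP.mem_of_one_sub_mulVec_eq_zero h.2⟩

theorem posDef_add_one_sub (hP : IsOrthProjOnto S P) (hM : M.PosSemidef) (hPM : P * M * P = M)
    (hrank : M.rank = Module.finrank ℂ S) : (M + (1 - P)).PosDef := by
  have hpsd := hM.add hP.posSemidef_one_sub
  refine .of_dotProduct_mulVec_pos hpsd.1 fun x hx =>
    (hpsd.dotProduct_mulVec_nonneg x).lt_of_ne' fun h0 => ?_
  obtain ⟨hMx, hxS⟩ :=
    hP.mulVec_eq_zero_and_mem_of_add_one_sub hM ((hpsd.dotProduct_mulVec_zero_iff x).1 h0)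
  exact (hP.rank_lt_finrank (hP.mul_eq_of_mul_mul_eq hPM) hxS hx hMx).ne hrank

theorem isDensity_supportedOn_rank_lt (hP : IsOrthProjOnto S P) (hPM : P * M * P = M)
    (htr : M.trace = 1) (h : (M + (1 - P)).PosSemidef) {u : k → ℂ} (hu : u ≠ 0)
    (hMu : (M + (1 - P)) *ᵥ u = 0) :
    IsDensity M ∧ SupportedOn S M ∧ M.rank < Module.finrank ℂ S := by
  have hM := hP.posSemidef_of_posSemidef_add_one_sub hPM h
  obtain ⟨hMu', huS⟩ := hP.mulVec_eq_zero_and_mem_of_add_one_sub hM hMu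
  exact ⟨⟨hM, htr⟩, ⟨P, hP, hPM⟩, hP.rank_lt_finrank (hP.mul_eq_of_mul_mul_eq hPM) huS hu hMu'⟩

theorem exists_pos_isDensity_add_smul (hP : IsOrthProjOnto S P) {ρ T : Matrix k k ℂ}
    (hρ : IsDensity ρ) (hPρ : P * ρ * P = ρ) (hρrank : ρ.rank = Module.finrank ℂ S)
    (hT : T.IsHermitian) (hPT : P * T * P = T) (hT0 : T ≠ 0) (htr : T.trace = 0) :
    ∃ t : ℝ, 0 < t ∧ IsDensity (ρ + (t : ℂ) • T) ∧ SupportedOn S (ρ + (t : ℂ) • T) ∧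
      (ρ + (t : ℂ) • T).rank < Module.finrank ℂ S := by
  have hT' : ¬T.PosSemidef := fun h => hT0 (h.trace_eq_zero_iff.1 htr)
  obtain ⟨t, ht, hpsd, u, hu, hker⟩ := (hP.posDef_add_one_sub hρ.1 hPρ
    hρrank).exists_posSemidef_add_smul_of_not_posSemidef hT hT'
  rw [add_right_comm] at hpsd hker
  refine ⟨t, ht, hP.isDensity_supportedOn_rank_lt ?_ ?_ hpsd hu hker⟩
  · rw [mul_add, add_mul, hPρ, mul_smul_comm, smul_mul_assoc, hPT]
  · rw [trace_add, trace_smul, htr, smul_zero, add_zero, hρ.2]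

end IsOrthProjOnto

theorem SupportedOn.mul_mul_eq {k : Type*} [Fintype k] {S : Submodule ℂ (k → ℂ)}
    {M P : Matrix k k ℂ} (hM : SupportedOn S M) (hP : IsOrthProjOnto S P) : P * M * P = M := by
  obtain ⟨Q, hQ, hQM⟩ := hM
  rwa [hQ.unique hP] at hQM

section PartialTrace

variable {m n : Type*} [Fintype n]

theorem trB_add (A B : Matrix (m × n) (m × n) ℂ) : trB (A + B) = trB A + trB B := by
  ext
  simp [trB, Finset.sum_add_distrib]

theorem trB_smul (c : ℂ) (A : Matrix (m × n) (m × n) ℂ) : trB (c • A) = c • trB A := by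
  ext
  simp [trB, Finset.mul_sum]

theorem trace_trB [Fintype m] (A : Matrix (m × n) (m × n) ℂ) : (trB A).trace = A.trace := by
  simp [trB, trace, Fintype.sum_prod_type]

end PartialTrace

theorem full_rank_state_has_two_boundary_preimages
    {m n : Type*} [Fintype m] [Fintype n] [DecidableEq m] [DecidableEq n]
    (S : Submodule ℂ (m × n → ℂ))
    (T : Matrix (m × n) (m × n) ℂ) (hT0 : T ≠ 0) (hTH : T.IsHermitian)
    (hTS : SupportedOn S T) (hTtr : trB T = 0)
    (ρ : Matrix (m × n) (m × n) ℂ) (hρ : IsDensity ρ) (hρS : SupportedOn S ρ)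
    (hρrank : ρ.rank = Module.finrank ℂ S) :
    ∃ ρ1 ρ2 : Matrix (m × n) (m × n) ℂ, ρ1 ≠ ρ2 ∧
      IsDensity ρ1 ∧ SupportedOn S ρ1 ∧ IsDensity ρ2 ∧ SupportedOn S ρ2 ∧
      ρ1.rank < Module.finrank ℂ S ∧ ρ2.rank < Module.finrank ℂ S ∧
      trB ρ1 = trB ρ ∧ trB ρ2 = trB ρ := by
  obtain ⟨P, hP, hPT⟩ := hTS
  have hPρ := hρS.mul_mul_eq hP
  have htr : T.trace = 0 := by rw [← trace_trB, hTtr, trace_zero]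
  have htrB (c : ℂ) : trB (ρ + c • T) = trB ρ := by
    rw [trB_add, trB_smul, hTtr, smul_zero, add_zero]
  obtain ⟨t, ht, hd1, hs1, hr1⟩ :=
    hP.exists_pos_isDensity_add_smul hρ hPρ hρrank hTH hPT hT0 htr
  obtain ⟨s, hs, hd2, hs2, hr2⟩ := hP.exists_pos_isDensity_add_smul hρ hPρ hρrank hTH.neg
    (by rw [mul_neg, neg_mul, hPT]) (neg_ne_zero.2 hT0) (by rw [trace_neg, htr, neg_zero])
  rw [smul_neg, ← neg_smul] at hd2 hs2 hr2
  refine ⟨_, _, fun h => ?_, hd1, hs1, hd2, hs2, hr1, hr2, htrB _, htrB _⟩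
  have hts : t = -s := by exact_mod_cast smul_left_injective ℂ hT0 (add_left_cancel h)
  linarith

end
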